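/- arXiv:1805.02979 — 2 statements merged into one kernel-verified Lean document; each statement's English description precedes it below -/
import Mathlib

section
/- If h : 𝔻 → (-1,1) is a real-valued harmonic function with h(0) = a, then for all z ∈ 𝔻, h(z) ≥ 1 − (4/π)·arctan(e(a)·(1+|z|)/(1-|z|)), where e(a) = cot(π(a+1)/4). -/
open Real Set Metric ComplexConjugate

/-!
Put `f = π (F + 1) / 4`, a holomorphic map of the disc into the strip `0 < re ζ < π / 2`, and
`β = f 0`. Since `|sin (ζ + conj β)|² - |sin (ζ - β)|² = sin (2 re ζ) sin (2 re β) > 0` on the strip,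
`ζ ↦ sin (ζ - β) / sin (ζ + conj β)` maps the strip into the disc and vanishes at `β`. The Schwarz
lemma for the composite gives `|sin (u - v)| ≤ |z| sin (u + v)` with `u = re f z`, `v = re β`;
dividing by `cos u cos v` this is `(1 - |z|) tan v ≤ (1 + |z|) tan u`, and taking arctangents
gives the bound.
-/

namespace Complex

lemma normSq_sin (z : ℂ) : normSq (sin z) = Real.sin z.re ^ 2 + Real.sinh z.im ^ 2 := by
  rw [sin_eq, ← ofReal_sin, ← ofReal_cos, ← ofReal_sinh, ← ofReal_cosh, ← ofReal_mul,
    ← ofReal_mul, normSq_add_mul_I]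
  nlinarith [Real.sin_sq_add_cos_sq z.re, Real.cosh_sq z.im]

lemma normSq_sin_add_conj_sub_normSq_sin_sub (ζ β : ℂ) :
    normSq (sin (ζ + conj β)) - normSq (sin (ζ - β)) =
      Real.sin (2 * ζ.re) * Real.sin (2 * β.re) := by
  simp only [normSq_sin, add_re, sub_re, conj_re, add_im, sub_im, conj_im, ← sub_eq_add_neg,
    Real.sin_add, Real.sin_sub, Real.sin_two_mul]
  ring

lemma normSq_sin_sub_lt_normSq_sin_add_conj {ζ β : ℂ} (hζ : ζ.re ∈ Ioo 0 (π / 2))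
    (hβ : β.re ∈ Ioo 0 (π / 2)) : normSq (sin (ζ - β)) < normSq (sin (ζ + conj β)) := by
  have sin_two_mul_pos : ∀ x ∈ Ioo 0 (π / 2), 0 < Real.sin (2 * x) := fun x hx =>
    Real.sin_pos_of_pos_of_lt_pi (by linarith [hx.1]) (by linarith [hx.2])
  linarith [normSq_sin_add_conj_sub_normSq_sin_sub ζ β,
    mul_pos (sin_two_mul_pos _ hζ) (sin_two_mul_pos _ hβ)]

theorem sin_sq_re_sub_le_of_mapsTo_strip {f : ℂ → ℂ} (hf : DifferentiableOn ℂ f (ball 0 1))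
    (hmaps : MapsTo f (ball 0 1) (re ⁻¹' Ioo 0 (π / 2))) {z : ℂ} (hz : z ∈ ball (0 : ℂ) 1) :
    Real.sin ((f z).re - (f 0).re) ^ 2 ≤ ‖z‖ ^ 2 * Real.sin ((f z).re + (f 0).re) ^ 2 := by
  set β := f 0
  have hβ : β.re ∈ Ioo 0 (π / 2) := hmaps (mem_ball_self one_pos)
  have hnorm_lt : ∀ w ∈ ball (0 : ℂ) 1, ‖sin (f w - β)‖ < ‖sin (f w + conj β)‖ := fun w hw =>
    (pow_lt_pow_iff_left₀ (norm_nonneg _) (norm_nonneg _) two_ne_zero).mp <| by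
      simpa only [← normSq_eq_norm_sq] using normSq_sin_sub_lt_normSq_sin_add_conj (hmaps hw) hβ
  have hden : ∀ w ∈ ball (0 : ℂ) 1, sin (f w + conj β) ≠ 0 := fun w hw =>
    norm_pos_iff.mp ((norm_nonneg _).trans_lt (hnorm_lt w hw))
  set G : ℂ → ℂ := fun w => sin (f w - β) / sin (f w + conj β)
  have hG : DifferentiableOn ℂ G (ball 0 1) :=
    (differentiable_sin.comp_differentiableOn (hf.sub_const β)).div
      (differentiable_sin.comp_differentiableOn (hf.add_const _)) hden
  have hG_maps : MapsTo G (ball 0 1) (closedBall 0 1) := fun w hw => by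
    rw [mem_closedBall_zero_iff, norm_div, div_le_one (norm_pos_iff.mpr (hden w hw))]
    exact (hnorm_lt w hw).le
  have hGz : ‖G z‖ ≤ ‖z‖ :=
    norm_le_norm_of_mapsTo_ball hG hG_maps (by simp [G, β]) (mem_ball_zero_iff.mp hz)
  have hsq : normSq (sin (f z - β)) ≤ ‖z‖ ^ 2 * normSq (sin (f z + conj β)) := by
    rw [norm_div, div_le_iff₀ (norm_pos_iff.mpr (hden z hz))] at hGz
    rw [normSq_eq_norm_sq, normSq_eq_norm_sq, ← mul_pow]
    exact pow_le_pow_left₀ (norm_nonneg _) hGz 2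
  have hr : ‖z‖ ^ 2 ≤ 1 := pow_le_one₀ (norm_nonneg z) (mem_ball_zero_iff.mp hz).le
  simp only [normSq_sin, sub_re, add_re, conj_re, sub_im, add_im, conj_im, ← sub_eq_add_neg]
    at hsq
  nlinarith [mul_nonneg (sub_nonneg.mpr hr) (sq_nonneg (Real.sinh ((f z).im - β.im)))]

end Complex

lemma pi_mul_add_one_div_four_mem_Ioo {s : ℝ} (hs : s ∈ Ioo (-1 : ℝ) 1) :
    π * (s + 1) / 4 ∈ Ioo 0 (π / 2) :=
  ⟨by nlinarith [pi_pos, hs.1], by nlinarith [pi_pos, hs.2]⟩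

lemma arctan_mul_tan_le_of_sin_sq_sub_le {u v r : ℝ} (hu : u ∈ Ioo 0 (π / 2))
    (hv : v ∈ Ioo 0 (π / 2)) (hr : 0 ≤ r) (h : sin (u - v) ^ 2 ≤ r ^ 2 * sin (u + v) ^ 2) :
    arctan ((1 - r) / (1 + r) * tan v) ≤ u := by
  obtain ⟨hu₀, hu₁⟩ := hu
  obtain ⟨hv₀, hv₁⟩ := hv
  have hsin_add : 0 < sin (u + v) := sin_pos_of_pos_of_lt_pi (by linarith) (by linarith)
  have hcu : 0 < cos u := cos_pos_of_mem_Ioo ⟨by linarith, hu₁⟩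
  have hcv : 0 < cos v := cos_pos_of_mem_Ioo ⟨by linarith, hv₁⟩
  have hsin_sub : -(r * sin (u + v)) ≤ sin (u - v) :=
    (abs_le_of_sq_le_sq' (by rwa [mul_pow]) (by positivity)).1
  rw [sin_add, sin_sub] at hsin_sub
  have htan : (1 - r) / (1 + r) * tan v ≤ tan u := by
    rw [tan_eq_sin_div_cos, tan_eq_sin_div_cos, div_mul_div_comm,
      div_le_div_iff₀ (by positivity) hcu]
    linear_combination hsin_sub
  calc arctan ((1 - r) / (1 + r) * tan v) ≤ arctan (tan u) := arctan_strictMono.monotone htan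
    _ = u := arctan_tan (by linarith) hu₁

lemma one_sub_four_div_pi_mul_arctan_inv_le {s t : ℝ} (ht : 0 < t)
    (hs : arctan t ≤ π * (s + 1) / 4) : 1 - 4 / π * arctan t⁻¹ ≤ s := by
  rw [arctan_inv_of_pos ht]
  have h := mul_le_mul_of_nonneg_left hs (by positivity : (0 : ℝ) ≤ 4 / π)
  field_simp at h ⊢
  linarith

/-- Schwarz lemma (lower bound): if `h` is a real-valued harmonic function on the unit
disk with values in `(-1,1)` and `h 0 = a`, then
`h z ≥ 1 - (4/π)·arctan (e(a)·(1+|z|)/(1-|z|))` with `e(a) = cot (π(a+1)/4)`.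
Harmonicity is encoded by `h` being the real part of a holomorphic function `F`. -/
theorem harmonic_schwarz_lower (a : ℝ) (h : ℂ → ℝ) (F : ℂ → ℂ)
    (hF : DifferentiableOn ℂ F (Metric.ball 0 1))
    (hre : ∀ z ∈ Metric.ball (0 : ℂ) 1, h z = (F z).re)
    (hmaps : Set.MapsTo h (Metric.ball 0 1) (Set.Ioo (-1 : ℝ) 1))
    (h0 : h 0 = a) :
    ∀ z ∈ Metric.ball (0 : ℂ) 1,
      h z ≥ 1 - (4 / Real.pi) *
          Real.arctan ((Real.tan (Real.pi * (a + 1) / 4))⁻¹ * (1 + ‖z‖) / (1 - ‖z‖)) := by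
  intro z hz
  have h0_mem : (0 : ℂ) ∈ ball (0 : ℂ) 1 := mem_ball_self one_pos
  have hr : ‖z‖ < 1 := mem_ball_zero_iff.mp hz
  set f : ℂ → ℂ := fun w => ((π / 4 : ℝ) : ℂ) * (F w + 1)
  have hf_re : ∀ w ∈ ball (0 : ℂ) 1, (f w).re = π * (h w + 1) / 4 := fun w hw => by
    simp only [f, Complex.re_ofReal_mul, Complex.add_re, Complex.one_re, hre w hw]
    ring
  have hf_maps : MapsTo f (ball 0 1) (Complex.re ⁻¹' Ioo 0 (π / 2)) := fun w hw => by
    rw [mem_preimage, hf_re w hw]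
    exact pi_mul_add_one_div_four_mem_Ioo (hmaps hw)
  have hsin := Complex.sin_sq_re_sub_le_of_mapsTo_strip ((hF.add_const 1).const_mul _) hf_maps hz
  rw [hf_re z hz, hf_re 0 h0_mem, h0] at hsin
  have ha := pi_mul_add_one_div_four_mem_Ioo (h0 ▸ hmaps h0_mem)
  have ht : 0 < (1 - ‖z‖) / (1 + ‖z‖) * tan (π * (a + 1) / 4) :=
    mul_pos (div_pos (by linarith) (by positivity)) (tan_pos_of_pos_of_lt_pi_div_two ha.1 ha.2)
  have key := arctan_mul_tan_le_of_sin_sq_sub_le (pi_mul_add_one_div_four_mem_Ioo (hmaps hz))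
    ha (norm_nonneg z) hsin
  rw [ge_iff_le, show (tan (π * (a + 1) / 4))⁻¹ * (1 + ‖z‖) / (1 - ‖z‖) =
      ((1 - ‖z‖) / (1 + ‖z‖) * tan (π * (a + 1) / 4))⁻¹ by rw [mul_inv, inv_div]; ring]
  exact one_sub_four_div_pi_mul_arctan_inv_le ht key
end

section
/- For a ∈ 𝔻, the supremum of |∇h(a)| over all real-valued harmonic maps h : 𝔻 → (-1,1) equals (4/π)·(1−|a|²)^{-1}. -/
/-!
If `F` is holomorphic on `𝔻` with `|Re F| < 1`, then `tan (π F / 4)` maps `𝔻` into itself, so the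
Schwarz–Pick lemma at `a` bounds its derivative by `(1 - |tan ζ|²) / (1 - |a|²)`, where
`ζ = π F(a) / 4`. Since `|cos ζ|² - |sin ζ|² = cos (2 Re ζ) ≤ 1`, this yields
`|F'(a)| (1 - |a|²) ≤ 4 / π`. Equality holds for `(2/π) (-i) log ((1 + w) / (1 - w))`, where `w` is
the disk automorphism sending `a` to `0`. Finally, the gradient of `Re F` has the norm of `F'`.
-/

open Set Metric Complex ComplexConjugate Filter
open scoped Real

noncomputable section

theorem norm_fderiv_re_comp {F : ℂ → ℂ} {a : ℂ} (hF : DifferentiableAt ℂ F a) :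
    ‖fderiv ℝ (fun z => (F z).re) a‖ = ‖deriv F a‖ := by
  have hd : HasFDerivAt (fun z => (F z).re) (reCLM.comp ((fderiv ℂ F a).restrictScalars ℝ)) a :=
    reCLM.hasFDerivAt.comp a (hF.hasFDerivAt.restrictScalars ℝ)
  rw [hd.fderiv, norm_deriv_eq_norm_fderiv]
  exact (StrongDual.extendRCLikeₗᵢ (𝕜 := ℂ) (F := ℂ)).symm.norm_map (fderiv ℂ F a)

def diskMobius (a z : ℂ) : ℂ := (z - a) / (1 - conj a * z)

section DiskMobius

variable {a z : ℂ}

theorem one_sub_conj_mul_ne_zero (ha : ‖a‖ < 1) (hz : ‖z‖ < 1) : 1 - conj a * z ≠ 0 := by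
  have h : ‖conj a * z‖ < 1 := by
    rw [norm_mul, RCLike.norm_conj]
    exact mul_lt_one_of_nonneg_of_lt_one_left (norm_nonneg a) ha hz.le
  refine sub_ne_zero.mpr fun h1 => ?_
  rw [← h1, norm_one] at h
  exact lt_irrefl 1 h

theorem norm_one_sub_conj_mul_sq_sub_norm_sub_sq (a z : ℂ) :
    ‖1 - conj a * z‖ ^ 2 - ‖z - a‖ ^ 2 = (1 - ‖a‖ ^ 2) * (1 - ‖z‖ ^ 2) := by
  simp only [← normSq_eq_norm_sq, normSq_apply, sub_re, sub_im, mul_re, mul_im, one_re, one_im,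
    conj_re, conj_im]
  ring

theorem norm_diskMobius_lt_one (ha : ‖a‖ < 1) (hz : ‖z‖ < 1) : ‖diskMobius a z‖ < 1 := by
  rw [diskMobius, norm_div, div_lt_one (norm_pos_iff.mpr (one_sub_conj_mul_ne_zero ha hz))]
  refine lt_of_pow_lt_pow_left₀ 2 (norm_nonneg _) (sub_pos.mp ?_)
  rw [norm_one_sub_conj_mul_sq_sub_norm_sub_sq]
  have := norm_nonneg a
  have := norm_nonneg z
  exact mul_pos (by nlinarith) (by nlinarith)

theorem mapsTo_diskMobius (ha : ‖a‖ < 1) : MapsTo (diskMobius a) (ball 0 1) (ball 0 1) :=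
  fun _ hz => mem_ball_zero_iff.mpr (norm_diskMobius_lt_one ha (mem_ball_zero_iff.mp hz))

theorem hasDerivAt_diskMobius (hz : 1 - conj a * z ≠ 0) :
    HasDerivAt (diskMobius a) (((1 - ‖a‖ ^ 2 : ℝ) : ℂ) / (1 - conj a * z) ^ 2) z := by
  have h := ((hasDerivAt_id z).sub_const a).div
    (((hasDerivAt_id z).const_mul (conj a)).const_sub 1) hz
  refine h.congr_deriv ?_
  push_cast
  rw [← conj_mul']
  simp only [id]
  ring

theorem differentiableOn_diskMobius (ha : ‖a‖ < 1) :
    DifferentiableOn ℂ (diskMobius a) (ball 0 1) := fun _ hz =>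
  (hasDerivAt_diskMobius (one_sub_conj_mul_ne_zero ha
    (mem_ball_zero_iff.mp hz))).differentiableAt.differentiableWithinAt

theorem hasDerivAt_diskMobius_self (ha : ‖a‖ < 1) :
    HasDerivAt (diskMobius a) ((1 - ‖a‖ ^ 2 : ℝ)⁻¹ : ℂ) a := by
  have h := hasDerivAt_diskMobius (one_sub_conj_mul_ne_zero ha ha)
  have hne : ((1 - ‖a‖ ^ 2 : ℝ) : ℂ) ≠ 0 :=
    ofReal_ne_zero.mpr (by nlinarith [norm_nonneg a])
  have hden : 1 - conj a * a = ((1 - ‖a‖ ^ 2 : ℝ) : ℂ) := by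
    rw [conj_mul']
    push_cast
    ring
  rw [hden] at h
  exact h.congr_deriv (by field_simp)

theorem hasDerivAt_diskMobius_neg_zero (a : ℂ) :
    HasDerivAt (diskMobius (-a)) ((1 - ‖a‖ ^ 2 : ℝ) : ℂ) 0 := by
  simpa [norm_neg] using hasDerivAt_diskMobius (a := -a) (z := 0) (by simp)

@[simp] theorem diskMobius_self (a : ℂ) : diskMobius a a = 0 := by simp [diskMobius]

@[simp] theorem diskMobius_neg_zero (a : ℂ) : diskMobius (-a) 0 = a := by simp [diskMobius]

end DiskMobius

theorem norm_deriv_mul_le_of_mapsTo_ball {g : ℂ → ℂ} {a : ℂ}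
    (hg : DifferentiableOn ℂ g (ball 0 1)) (hmaps : MapsTo g (ball 0 1) (ball 0 1))
    (ha : a ∈ ball 0 1) :
    ‖deriv g a‖ * (1 - ‖a‖ ^ 2) ≤ 1 - ‖g a‖ ^ 2 := by
  have ha' : ‖-a‖ < 1 := by rwa [norm_neg, ← mem_ball_zero_iff]
  have hb : ‖g a‖ < 1 := mem_ball_zero_iff.mp (hmaps ha)
  set K := diskMobius (g a) ∘ g ∘ diskMobius (-a)
  have hK : DifferentiableOn ℂ K (ball 0 1) :=
    (differentiableOn_diskMobius hb).comp
      (hg.comp (differentiableOn_diskMobius ha') (mapsTo_diskMobius ha'))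
      (hmaps.comp (mapsTo_diskMobius ha'))
  have hKmaps : MapsTo K (ball 0 1) (closedBall (K 0) 1) := by
    rw [show K 0 = 0 by simp [K]]
    exact ((mapsTo_diskMobius hb).comp (hmaps.comp (mapsTo_diskMobius ha'))).mono_right
      ball_subset_closedBall
  have hg' : HasDerivAt g (deriv g a) (diskMobius (-a) 0) := by
    rw [diskMobius_neg_zero]
    exact (hg.differentiableAt (isOpen_ball.mem_nhds ha)).hasDerivAt
  have hKderiv : HasDerivAt K
      ((1 - ‖g a‖ ^ 2 : ℝ)⁻¹ * (deriv g a * (1 - ‖a‖ ^ 2 : ℝ))) 0 := by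
    refine HasDerivAt.comp (h₂ := diskMobius (g a)) 0 ?_
      (hg'.comp 0 (hasDerivAt_diskMobius_neg_zero a))
    simpa using hasDerivAt_diskMobius_self hb
  have schwarz := norm_deriv_le_one_of_mapsTo_ball hK hKmaps one_pos
  have hpos : 0 < 1 - ‖g a‖ ^ 2 := by nlinarith [norm_nonneg (g a)]
  have hpos' : 0 < 1 - ‖a‖ ^ 2 := by nlinarith [norm_nonneg a, mem_ball_zero_iff.mp ha]
  rwa [hKderiv.deriv, norm_mul, norm_mul, norm_real, norm_real,
    Real.norm_of_nonneg (inv_pos.mpr hpos).le, Real.norm_of_nonneg hpos'.le,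
    inv_mul_le_iff₀ hpos, mul_one] at schwarz

section Tangent

variable {ζ : ℂ}

theorem norm_cos_sq_sub_norm_sin_sq (ζ : ℂ) :
    ‖cos ζ‖ ^ 2 - ‖sin ζ‖ ^ 2 = Real.cos (2 * ζ.re) := by
  have h : cos ζ * conj (cos ζ) - sin ζ * conj (sin ζ) = cos (ζ + conj ζ) := by
    rw [← cos_conj, ← sin_conj, cos_add]
  rw [mul_conj', mul_conj', add_conj, ← ofReal_cos] at h
  exact_mod_cast h

theorem norm_sin_sq_lt_norm_cos_sq (hζ : |ζ.re| < π / 4) : ‖sin ζ‖ ^ 2 < ‖cos ζ‖ ^ 2 := by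
  have hcos : 0 < Real.cos (2 * ζ.re) := by
    obtain ⟨h₁, h₂⟩ := abs_lt.mp hζ
    exact Real.cos_pos_of_mem_Ioo ⟨by linarith, by linarith⟩
  linarith [norm_cos_sq_sub_norm_sin_sq ζ]

theorem cos_ne_zero_of_abs_re_lt (hζ : |ζ.re| < π / 4) : cos ζ ≠ 0 := by
  have := (sq_nonneg _).trans_lt (norm_sin_sq_lt_norm_cos_sq hζ)
  exact norm_ne_zero_iff.mp fun h => by simp [h] at this

theorem norm_tan_lt_one_of_abs_re_lt (hζ : |ζ.re| < π / 4) : ‖tan ζ‖ < 1 := by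
  rw [tan_eq_sin_div_cos, norm_div,
    div_lt_one (norm_pos_iff.mpr (cos_ne_zero_of_abs_re_lt hζ))]
  exact lt_of_pow_lt_pow_left₀ 2 (norm_nonneg _) (norm_sin_sq_lt_norm_cos_sq hζ)

theorem one_sub_norm_tan_sq_le (hζ : cos ζ ≠ 0) : 1 - ‖tan ζ‖ ^ 2 ≤ (‖cos ζ‖ ^ 2)⁻¹ := by
  have hc : 0 < ‖cos ζ‖ ^ 2 := by positivity
  have h : 1 - ‖tan ζ‖ ^ 2 = Real.cos (2 * ζ.re) / ‖cos ζ‖ ^ 2 := by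
    rw [← norm_cos_sq_sub_norm_sin_sq, tan_eq_sin_div_cos, norm_div, div_pow]
    field_simp
  rw [h, div_eq_mul_inv]
  exact mul_le_of_le_one_left (inv_pos.mpr hc).le (Real.cos_le_one _)

end Tangent

theorem norm_deriv_mul_le_of_mapsTo_strip {F : ℂ → ℂ} {a : ℂ}
    (hF : DifferentiableOn ℂ F (ball 0 1))
    (hmaps : MapsTo (fun z => (F z).re) (ball 0 1) (Ioo (-1) 1)) (ha : a ∈ ball 0 1) :
    ‖deriv F a‖ * (1 - ‖a‖ ^ 2) ≤ 4 / π := by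
  set ζ : ℂ → ℂ := fun z => (π / 4 : ℝ) * F z
  have hζ : ∀ z ∈ ball (0 : ℂ) 1, |(ζ z).re| < π / 4 := fun z hz => by
    have := abs_lt.mpr (hmaps hz)
    simp only [ζ, re_ofReal_mul, abs_mul, abs_of_pos (by positivity : (0 : ℝ) < π / 4)]
    nlinarith [Real.pi_pos]
  have hg : DifferentiableOn ℂ (tan ∘ ζ) (ball 0 1) := fun z hz =>
    ((differentiableAt_tan.mpr (cos_ne_zero_of_abs_re_lt (hζ z hz))).comp z
      ((hF.differentiableAt (isOpen_ball.mem_nhds hz)).const_mul _)).differentiableWithinAt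
  have hgmaps : MapsTo (tan ∘ ζ) (ball 0 1) (ball 0 1) := fun z hz =>
    mem_ball_zero_iff.mpr (norm_tan_lt_one_of_abs_re_lt (hζ z hz))
  have hcos := cos_ne_zero_of_abs_re_lt (hζ a ha)
  have hgderiv : HasDerivAt (tan ∘ ζ) (1 / cos (ζ a) ^ 2 * ((π / 4 : ℝ) * deriv F a)) a :=
    (hasDerivAt_tan hcos).comp a
      ((hF.differentiableAt (isOpen_ball.mem_nhds ha)).hasDerivAt.const_mul _)
  have pick := (norm_deriv_mul_le_of_mapsTo_ball hg hgmaps ha).trans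
    (one_sub_norm_tan_sq_le hcos)
  have hc : 0 < ‖cos (ζ a)‖ ^ 2 := by positivity
  rw [hgderiv.deriv, norm_mul, norm_mul, norm_div, norm_one, norm_pow, norm_real,
    Real.norm_of_nonneg (by positivity)] at pick
  calc ‖deriv F a‖ * (1 - ‖a‖ ^ 2)
      = 4 / π * (‖cos (ζ a)‖ ^ 2 *
          (1 / ‖cos (ζ a)‖ ^ 2 * (π / 4 * ‖deriv F a‖) * (1 - ‖a‖ ^ 2))) := by
        field_simp
    _ ≤ 4 / π * (‖cos (ζ a)‖ ^ 2 * (‖cos (ζ a)‖ ^ 2)⁻¹) := by gcongr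
    _ = 4 / π := by field_simp

def diskToStrip (w : ℂ) : ℂ := (2 / π : ℝ) * (-I * log ((1 + w) / (1 - w)))

section DiskToStrip

variable {w : ℂ}

theorem one_sub_ne_zero_of_norm_lt_one (hw : ‖w‖ < 1) : 1 - w ≠ 0 :=
  sub_ne_zero.mpr fun h => by simp [← h] at hw

theorem re_one_add_div_one_sub_pos (hw : ‖w‖ < 1) : 0 < ((1 + w) / (1 - w)).re := by
  rw [div_re, ← add_div]
  refine div_pos ?_ (normSq_pos.mpr (one_sub_ne_zero_of_norm_lt_one hw))
  have h : (1 + w).re * (1 - w).re + (1 + w).im * (1 - w).im = 1 - ‖w‖ ^ 2 := by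
    rw [← normSq_eq_norm_sq, normSq_apply]
    simp only [add_re, add_im, sub_re, sub_im, one_re, one_im]
    ring
  rw [h]
  nlinarith [norm_nonneg w]

theorem re_diskToStrip_mem_Ioo (hw : ‖w‖ < 1) : (diskToStrip w).re ∈ Ioo (-1) 1 := by
  have harg := abs_arg_lt_pi_div_two_iff.mpr (Or.inl (re_one_add_div_one_sub_pos hw))
  have hre : (diskToStrip w).re = 2 / π * arg ((1 + w) / (1 - w)) := by
    simp [diskToStrip, log_im]
  rw [hre, mem_Ioo, ← abs_lt, abs_mul, abs_of_pos (by positivity)]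
  calc 2 / π * |arg ((1 + w) / (1 - w))| < 2 / π * (π / 2) := by gcongr
    _ = 1 := by field_simp

theorem hasDerivAt_diskToStrip (hw : ‖w‖ < 1) :
    HasDerivAt diskToStrip
      ((2 / π : ℝ) * (-I * (((1 + w) / (1 - w))⁻¹ * (2 / (1 - w) ^ 2)))) w := by
  have hw' := one_sub_ne_zero_of_norm_lt_one hw
  have hquot : HasDerivAt (fun w => (1 + w) / (1 - w)) (2 / (1 - w) ^ 2) w := by
    refine (((hasDerivAt_id w).const_add 1).div
      ((hasDerivAt_id w).const_sub 1) hw').congr_deriv ?_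
    simp only [id]
    ring
  have hslit : (1 + w) / (1 - w) ∈ slitPlane := Or.inl (re_one_add_div_one_sub_pos hw)
  exact (((hasDerivAt_log hslit).comp w hquot).const_mul (-I)).const_mul _

theorem differentiableOn_diskToStrip : DifferentiableOn ℂ diskToStrip (ball 0 1) := fun _ hw =>
  (hasDerivAt_diskToStrip (mem_ball_zero_iff.mp hw)).differentiableAt.differentiableWithinAt

theorem norm_deriv_diskToStrip_comp_diskMobius_self {a : ℂ} (ha : ‖a‖ < 1) :
    ‖deriv (diskToStrip ∘ diskMobius a) a‖ = 4 / π * (1 - ‖a‖ ^ 2)⁻¹ := by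
  have h := (hasDerivAt_diskToStrip (w := diskMobius a a) (by simp)).comp a
    (hasDerivAt_diskMobius_self ha)
  have hpos : 0 < 1 - ‖a‖ ^ 2 := by nlinarith [norm_nonneg a]
  rw [h.deriv, diskMobius_self]
  simp only [add_zero, sub_zero, div_one, inv_one, one_pow, one_mul, norm_mul, norm_neg, norm_I,
    norm_inv, norm_real, norm_ofNat, Real.norm_of_nonneg hpos.le,
    Real.norm_of_nonneg (by positivity : (0 : ℝ) ≤ 2 / π)]
  ring

end DiskToStrip

end

/-- Khavinson's extremal problem in the plane: for `a ∈ 𝔻`, the supremum of `|∇h(a)|`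
over all real-valued harmonic maps `h : 𝔻 → (-1,1)` equals `(4/π)·(1-|a|²)⁻¹`
(and is attained). -/
theorem khavinson_planar (a : ℂ) (ha : a ∈ Metric.ball (0 : ℂ) 1) :
    IsGreatest {L : ℝ | ∃ (h : ℂ → ℝ) (F : ℂ → ℂ),
        DifferentiableOn ℂ F (Metric.ball 0 1) ∧
        (∀ z ∈ Metric.ball (0 : ℂ) 1, h z = (F z).re) ∧
        Set.MapsTo h (Metric.ball 0 1) (Set.Ioo (-1 : ℝ) 1) ∧
        L = ‖fderiv ℝ h a‖}
      ((4 / Real.pi) * (1 - ‖a‖ ^ 2)⁻¹) := by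
  have ha' : ‖a‖ < 1 := mem_ball_zero_iff.mp ha
  have hF : DifferentiableOn ℂ (diskToStrip ∘ diskMobius a) (ball 0 1) :=
    differentiableOn_diskToStrip.comp (differentiableOn_diskMobius ha') (mapsTo_diskMobius ha')
  refine ⟨⟨_, _, hF, fun _ _ => rfl, fun z hz => re_diskToStrip_mem_Ioo
    (mem_ball_zero_iff.mp (mapsTo_diskMobius ha' hz)), ?_⟩, ?_⟩
  · rw [norm_fderiv_re_comp (hF.differentiableAt (isOpen_ball.mem_nhds ha)),
      norm_deriv_diskToStrip_comp_diskMobius_self ha']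
  · rintro _ ⟨h, F, hF, hre, hmaps, rfl⟩
    rw [(eventuallyEq_of_mem (isOpen_ball.mem_nhds ha) hre).fderiv_eq,
      norm_fderiv_re_comp (hF.differentiableAt (isOpen_ball.mem_nhds ha)),
      le_mul_inv_iff₀ (by nlinarith [norm_nonneg a])]
    exact norm_deriv_mul_le_of_mapsTo_strip hF (hmaps.congr hre) ha
end
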